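/- For n ≥ 14, the maximum size M(n,2) of a 2-grain-error-correcting code of length n satisfies M(n,2) ≤ 2·⌊ 2^{n+2}·(2 + 2/(n−6)) / (2n(n−3)) ⌋. -/

import Mathlib

/-- `e` is a `t`-grain-error for `x`: weight at most `t`, `e₁ = 0`, and an error at
position `i` (2 ≤ i ≤ n) requires `x_i ≠ x_{i-1}`. (0-indexed here.) -/
def grainError {n : ℕ} (t : ℕ) (x e : Fin n → ZMod 2) : Prop :=
  (Finset.univ.filter fun i => e i ≠ 0).card ≤ t ∧
  (∀ i : Fin n, (i : ℕ) = 0 → e i = 0) ∧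
  (∀ i : Fin n, 0 < (i : ℕ) → e i ≠ 0 →
    x i ≠ x ⟨(i : ℕ) - 1, lt_of_le_of_lt (Nat.sub_le _ _) i.isLt⟩)

/-- The grain error-ball `B_{t,G}(x)`. -/
def grainBall {n : ℕ} (t : ℕ) (x : Fin n → ZMod 2) : Set (Fin n → ZMod 2) :=
  {y | ∃ e, grainError t x e ∧ y = x + e}

/-- The number of runs of a binary vector. -/
def runs {n : ℕ} (x : Fin n → ZMod 2) : ℕ :=
  (if n = 0 then 0 else 1) +
  (Finset.univ.filter fun i : Fin n =>
    0 < (i : ℕ) ∧ x i ≠ x ⟨(i : ℕ) - 1, lt_of_le_of_lt (Nat.sub_le _ _) i.isLt⟩).card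

def grainCorrecting {n : ℕ} (t : ℕ) (C : Finset (Fin n → ZMod 2)) : Prop :=
  ∀ x ∈ C, ∀ y ∈ C, x ≠ y → Disjoint (grainBall t x) (grainBall t y)

/-!
Let `D(x)` be the set of positions at which `x` changes value. For `S ⊆ D(x)` with `|S| ≤ 2`,
flipping the bits of `x` on `S` is a 2-grain-error, and flipping a bit at a change point never
increases the number of change points. So the grain ball of `x` contains at least
`V(|D(x)|) = 1 + k + C(k, 2)` words `y`, all with `|D(y)| ≤ |D(x)|`. Giving each word `y` the
weight `1 / V(|D(y)|)`, every such ball has weight at least `1`; the balls of a code are disjoint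
and keep the first bit, so the codewords starting with `b` number at most the total weight of the
words starting with `b`, which is `∑ₖ C(n-1, k) / V(k)`. Bounding `1 / V(k)` by a combination of
`1 / ((k+1)⋯(k+j))`, `j = 2, 3, 4`, turns this into binomial sums `≤ 2^(n-1+j) / (n⋯(n+j-1))`.
-/

open Finset

lemma ZMod.add_one_eq_of_ne {a b : ZMod 2} (h : a ≠ b) : a + 1 = b := by
  revert a b; decide

lemma Finset.card_le_sum_of_pairwiseDisjoint {ι α R : Type*} [DecidableEq α] [CommSemiring R]
    [PartialOrder R] [IsOrderedRing R] {C : Finset ι} {B : ι → Finset α} {U : Finset α}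
    {w : α → R} (hw : ∀ y ∈ U, 0 ≤ w y) (hBU : ∀ x ∈ C, B x ⊆ U)
    (hB : (C : Set ι).PairwiseDisjoint B) (hone : ∀ x ∈ C, 1 ≤ ∑ y ∈ B x, w y) :
    (#C : R) ≤ ∑ y ∈ U, w y :=
  calc (#C : R) = ∑ _ ∈ C, 1 := by simp
    _ ≤ ∑ x ∈ C, ∑ y ∈ B x, w y := sum_le_sum hone
    _ = ∑ y ∈ C.biUnion B, w y := (sum_biUnion hB).symm
    _ ≤ ∑ y ∈ U, w y :=
        sum_le_sum_of_subset_of_nonneg (biUnion_subset.2 hBU) fun y hy _ => hw y hy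

lemma Nat.choose_mul_ascFactorial (m k j : ℕ) :
    m.choose k * (m + 1).ascFactorial j = (m + j).choose (k + j) * (k + 1).ascFactorial j := by
  induction j with
  | zero => simp
  | succ j ih =>
    calc m.choose k * (m + 1).ascFactorial (j + 1)
        = (m + j + 1) * (m.choose k * (m + 1).ascFactorial j) := by
          rw [Nat.ascFactorial_succ]; ring
      _ = (m + j + 1) * (m + j).choose (k + j) * (k + 1).ascFactorial j := by rw [ih]; ring
      _ = (m + j + 1).choose (k + j + 1) * (k + j + 1) * (k + 1).ascFactorial j := by
          rw [Nat.add_one_mul_choose_eq]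
      _ = (m + (j + 1)).choose (k + (j + 1)) * (k + 1).ascFactorial (j + 1) := by
          rw [Nat.ascFactorial_succ, ← add_assoc, ← add_assoc]; ring

lemma Nat.sum_range_choose_add_le (m j : ℕ) :
    ∑ k ∈ range (m + 1), (m + j).choose (j + k) ≤ 2 ^ (m + j) :=
  calc _ ≤ ∑ i ∈ range j, (m + j).choose i
          + ∑ k ∈ range (m + 1), (m + j).choose (j + k) := le_add_self
    _ = ∑ i ∈ range (m + j + 1), (m + j).choose i := by
        rw [← sum_range_add, show j + (m + 1) = m + j + 1 by omega]
    _ = 2 ^ (m + j) := Nat.sum_range_choose _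

lemma sum_choose_div_ascFactorial_le {K : Type*} [Field K] [LinearOrder K]
    [IsStrictOrderedRing K] (m j : ℕ) :
    ∑ k ∈ range (m + 1), (m.choose k : K) / (k + 1).ascFactorial j
      ≤ 2 ^ (m + j) / (m + 1).ascFactorial j := by
  have hA : (0 : K) < (m + 1).ascFactorial j := by exact_mod_cast Nat.ascFactorial_pos _ _
  have hterm : ∀ k, (m.choose k : K) / (k + 1).ascFactorial j
      = (m + j).choose (j + k) / (m + 1).ascFactorial j := fun k => by
    have hB : (0 : K) < (k + 1).ascFactorial j := by exact_mod_cast Nat.ascFactorial_pos _ _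
    rw [div_eq_div_iff hB.ne' hA.ne', add_comm j k]
    exact_mod_cast Nat.choose_mul_ascFactorial m k j
  rw [sum_congr rfl fun k _ => hterm k, ← sum_div]
  gcongr
  exact_mod_cast Nat.sum_range_choose_add_le m j

namespace GrainCode

variable {n : ℕ}

-- truncated subtraction makes `prev 0 = 0`
def prev (i : Fin n) : Fin n := ⟨i - 1, lt_of_le_of_lt (Nat.sub_le _ _) i.isLt⟩

def boundaries (x : Fin n → ZMod 2) : Finset (Fin n) :=
  univ.filter fun i => 0 < (i : ℕ) ∧ x i ≠ x (prev i)

def flipVec (S : Finset (Fin n)) : Fin n → ZMod 2 := fun i => if i ∈ S then 1 else 0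

lemma flipVec_insert (a : Fin n) (S : Finset (Fin n)) (ha : a ∉ S) :
    flipVec (insert a S) = flipVec S + flipVec {a} := by
  funext i
  by_cases hi : i = a
  · subst hi; simp [flipVec, ha]
  · simp [flipVec, hi]

lemma flipVec_injective : Function.Injective (flipVec : Finset (Fin n) → Fin n → ZMod 2) := by
  intro S T h
  ext i
  have := congrFun h i
  by_cases hS : i ∈ S <;> by_cases hT : i ∈ T <;> simp_all [flipVec]

lemma card_boundaries_add_flipVec_singleton_le {z : Fin n → ZMod 2} {i : Fin n}
    (hi : i ∈ boundaries z) : #(boundaries (z + flipVec {i})) ≤ #(boundaries z) := by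
  -- flipping bit `i` removes the boundary at `i` and can only create one at `i + 1`
  have hsub : boundaries (z + flipVec {i}) ⊆
      (boundaries z).erase i ∪ univ.filter fun k => (k : ℕ) = i + 1 := by
    intro k hk
    simp only [boundaries, mem_filter, mem_univ, true_and, Pi.add_apply, flipVec,
      mem_singleton] at hk
    simp only [boundaries, mem_union, mem_erase, mem_filter, mem_univ, true_and]
    by_cases hki : (k : ℕ) = i + 1
    · exact Or.inr hki
    have hprev : prev k ≠ i := fun h => hki <| by
      have := congrArg Fin.val h; simp only [prev] at this; omega
    rw [if_neg hprev, add_zero] at hk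
    by_cases hk' : k = i
    · subst hk'
      exact absurd (ZMod.add_one_eq_of_ne (mem_filter.1 hi).2.2) (by simpa using hk.2)
    · rw [if_neg hk', add_zero] at hk
      exact Or.inl ⟨hk', hk⟩
  have hone : #(univ.filter fun k : Fin n => (k : ℕ) = i + 1) ≤ 1 :=
    card_le_one.2 fun a ha b hb => Fin.ext (by simp only [mem_filter] at ha hb; omega)
  calc #(boundaries (z + flipVec {i}))
      ≤ #((boundaries z).erase i) + 1 :=
        (card_le_card hsub).trans ((card_union_le _ _).trans (by omega))
    _ = #(boundaries z) := card_erase_add_one hi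

lemma card_boundaries_add_flipVec_le {x : Fin n → ZMod 2} {S : Finset (Fin n)}
    (hS : S ⊆ boundaries x) : #(boundaries (x + flipVec S)) ≤ #(boundaries x) := by
  induction S using Finset.induction_on_min with
  | empty =>
    have : flipVec (∅ : Finset (Fin n)) = 0 := funext fun i => by simp [flipVec]
    simp [this]
  | insert a S hlt ih =>
    have haS : a ∉ S := fun h => lt_irrefl a (hlt a h)
    have ha : a ∈ boundaries x := hS (mem_insert_self a S)
    -- `S` lies strictly after `a`, so flipping it keeps the boundary at `a`
    have ha' : a ∈ boundaries (x + flipVec S) := by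
      simp only [boundaries, mem_filter, mem_univ, true_and] at ha ⊢
      have hprev : prev a ∉ S := fun h => by
        have := hlt _ h; rw [Fin.lt_def] at this; simp [prev] at this; omega
      simpa [flipVec, haS, hprev] using ha
    rw [flipVec_insert a S haS, ← add_assoc]
    exact (card_boundaries_add_flipVec_singleton_le ha').trans
      (ih ((subset_insert a S).trans hS))

lemma grainError_flipVec {t : ℕ} {x : Fin n → ZMod 2} {S : Finset (Fin n)}
    (hS : S ⊆ boundaries x) (hcard : #S ≤ t) : grainError t x (flipVec S) := by
  have hmem : ∀ i, flipVec S i ≠ 0 ↔ i ∈ S := fun i => by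
    by_cases h : i ∈ S <;> simp [flipVec, h]
  have hbd : ∀ i ∈ S, 0 < (i : ℕ) ∧ x i ≠ x (prev i) := fun i hi => by
    simpa [boundaries] using hS hi
  refine ⟨?_, fun i hi => ?_, fun i _ hi => (hbd i ((hmem i).1 hi)).2⟩
  · simpa only [hmem, filter_mem_eq_inter, univ_inter] using hcard
  · by_contra h
    exact absurd hi (hbd i ((hmem i).1 h)).1.ne'

def errorPatterns (t : ℕ) (x : Fin n → ZMod 2) : Finset (Finset (Fin n)) :=
  (range (t + 1)).biUnion fun j => (boundaries x).powersetCard j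

lemma mem_errorPatterns {t : ℕ} {x : Fin n → ZMod 2} {S : Finset (Fin n)} :
    S ∈ errorPatterns t x ↔ S ⊆ boundaries x ∧ #S ≤ t := by
  simp only [errorPatterns, mem_biUnion, mem_range, mem_powersetCard]
  exact ⟨fun ⟨_, hj, hS, hSj⟩ => ⟨hS, by omega⟩,
    fun ⟨hS, hSt⟩ => ⟨#S, by omega, hS, rfl⟩⟩

def ballVolume (t k : ℕ) : ℕ := ∑ j ∈ range (t + 1), k.choose j

lemma ballVolume_pos (t k : ℕ) : 0 < ballVolume t k :=
  (by simp : 0 < k.choose 0).trans_le <|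
    single_le_sum (fun _ _ => Nat.zero_le _) (mem_range.2 t.succ_pos)

lemma ballVolume_mono (t : ℕ) : Monotone (ballVolume t) := fun _ _ hkl =>
  sum_le_sum fun j _ => Nat.choose_le_choose j hkl

lemma card_errorPatterns (t : ℕ) (x : Fin n → ZMod 2) :
    #(errorPatterns t x) = ballVolume t #(boundaries x) := by
  rw [errorPatterns, card_biUnion ((pairwise_disjoint_powersetCard _).set_pairwise _)]
  simp [ballVolume]

def innerBall (t : ℕ) (x : Fin n → ZMod 2) : Finset (Fin n → ZMod 2) :=
  (errorPatterns t x).image (x + flipVec ·)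

lemma card_innerBall (t : ℕ) (x : Fin n → ZMod 2) :
    #(innerBall t x) = ballVolume t #(boundaries x) := by
  rw [innerBall, card_image_of_injective _ fun _ _ h => flipVec_injective (add_left_cancel h),
    card_errorPatterns]

lemma coe_innerBall_subset_grainBall (t : ℕ) (x : Fin n → ZMod 2) :
    ↑(innerBall t x) ⊆ grainBall t x := by
  intro y hy
  obtain ⟨S, hS, rfl⟩ := mem_image.1 hy
  obtain ⟨hSx, hSt⟩ := mem_errorPatterns.1 hS
  exact ⟨flipVec S, grainError_flipVec hSx hSt, rfl⟩

lemma card_boundaries_le_of_mem_innerBall {t : ℕ} {x y : Fin n → ZMod 2}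
    (hy : y ∈ innerBall t x) : #(boundaries y) ≤ #(boundaries x) := by
  obtain ⟨S, hS, rfl⟩ := mem_image.1 hy
  exact card_boundaries_add_flipVec_le (mem_errorPatterns.1 hS).1

lemma apply_zero_of_mem_innerBall {m t : ℕ} {x y : Fin (m + 1) → ZMod 2}
    (hy : y ∈ innerBall t x) : y 0 = x 0 := by
  obtain ⟨S, hS, rfl⟩ := mem_image.1 hy
  have h0 : (0 : Fin (m + 1)) ∉ S := fun h => by
    simpa [boundaries] using (mem_errorPatterns.1 hS).1 h
  simp [flipVec, h0]

lemma one_le_sum_inv_ballVolume {K : Type*} [Field K] [LinearOrder K] [IsStrictOrderedRing K]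
    (t : ℕ) (x : Fin n → ZMod 2) :
    1 ≤ ∑ y ∈ innerBall t x, ((ballVolume t #(boundaries y) : ℕ) : K)⁻¹ := by
  have hpos : (0 : K) < ballVolume t #(boundaries x) := by exact_mod_cast ballVolume_pos _ _
  calc (1 : K) = ∑ _ ∈ innerBall t x, ((ballVolume t #(boundaries x) : ℕ) : K)⁻¹ := by
        rw [sum_const, card_innerBall, nsmul_eq_mul, mul_inv_cancel₀ hpos.ne']
    _ ≤ ∑ y ∈ innerBall t x, ((ballVolume t #(boundaries y) : ℕ) : K)⁻¹ :=
        sum_le_sum fun y hy => inv_anti₀ (by exact_mod_cast ballVolume_pos _ _) <|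
          by exact_mod_cast ballVolume_mono t (card_boundaries_le_of_mem_innerBall hy)

section ChangePoints

variable {m : ℕ}

def changePoints (y : Fin (m + 1) → ZMod 2) : Finset (Fin m) :=
  univ.filter fun j => y j.castSucc ≠ y j.succ

def ofChangePoints (b : ZMod 2) (T : Finset (Fin m)) : Fin (m + 1) → ZMod 2 :=
  Fin.induction b fun j a => a + flipVec T j

lemma boundaries_eq_map_changePoints (y : Fin (m + 1) → ZMod 2) :
    boundaries y = (changePoints y).map (Fin.succEmb m) := by
  ext i
  cases i using Fin.cases with
  | zero => simp [boundaries]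
  | succ j =>
    have : prev j.succ = j.castSucc := Fin.ext (by simp [prev])
    simp [boundaries, changePoints, this, ne_comm]

lemma changePoints_ofChangePoints (b : ZMod 2) (T : Finset (Fin m)) :
    changePoints (ofChangePoints b T) = T := by
  ext j
  by_cases hj : j ∈ T <;> simp [changePoints, ofChangePoints, flipVec, hj]

lemma ofChangePoints_changePoints {y : Fin (m + 1) → ZMod 2} {b : ZMod 2} (hy : y 0 = b) :
    ofChangePoints b (changePoints y) = y := by
  funext i
  induction i using Fin.induction with
  | zero => exact hy.symm
  | succ j ih =>
    rw [ofChangePoints, Fin.induction_succ, ← ofChangePoints, ih]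
    by_cases h : y j.castSucc = y j.succ
    · simp [flipVec, changePoints, h]
    · simpa [flipVec, changePoints, h] using ZMod.add_one_eq_of_ne h

lemma sum_filter_apply_zero_eq {M : Type*} [AddCommMonoid M] (b : ZMod 2) (f : ℕ → M) :
    ∑ y ∈ univ.filter (fun y : Fin (m + 1) → ZMod 2 => y 0 = b), f #(boundaries y)
      = ∑ k ∈ range (m + 1), m.choose k • f k :=
  calc _ = ∑ T : Finset (Fin m), f #T :=
        sum_nbij' changePoints (ofChangePoints b) (by simp)
          (fun _ _ => mem_filter.2 ⟨mem_univ _, rfl⟩)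
          (fun y hy => ofChangePoints_changePoints (mem_filter.1 hy).2)
          (fun T _ => changePoints_ofChangePoints b T)
          (fun y _ => by rw [boundaries_eq_map_changePoints, card_map])
    _ = _ := by rw [← powerset_univ, sum_powerset_apply_card, card_univ, Fintype.card_fin]

end ChangePoints

lemma card_filter_apply_zero_le {K : Type*} [Field K] [LinearOrder K] [IsStrictOrderedRing K]
    {m t : ℕ} {C : Finset (Fin (m + 1) → ZMod 2)} (hC : grainCorrecting t C) (b : ZMod 2) :
    (#{x ∈ C | x 0 = b} : K) ≤ ∑ k ∈ range (m + 1), (m.choose k : K) / ballVolume t k :=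
  calc (#{x ∈ C | x 0 = b} : K)
      ≤ ∑ y ∈ univ.filter (fun y : Fin (m + 1) → ZMod 2 => y 0 = b),
          ((ballVolume t #(boundaries y) : ℕ) : K)⁻¹ :=
        card_le_sum_of_pairwiseDisjoint (B := innerBall t) (fun _ _ => by positivity)
          (fun x hx y hy => mem_filter.2
            ⟨mem_univ y, (apply_zero_of_mem_innerBall hy).trans (mem_filter.1 hx).2⟩)
          (fun x hx x' hx' hne => disjoint_coe.1 <|
            (hC x (mem_filter.1 hx).1 x' (mem_filter.1 hx').1 hne).mono
              (coe_innerBall_subset_grainBall t x) (coe_innerBall_subset_grainBall t x'))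
          (fun x _ => one_le_sum_inv_ballVolume t x)
    _ = _ := (sum_filter_apply_zero_eq b fun k => ((ballVolume t k : ℕ) : K)⁻¹).trans <|
        sum_congr rfl fun k _ => by rw [nsmul_eq_mul, div_eq_mul_inv]

lemma cast_ballVolume_two {K : Type*} [Field K] [CharZero K] (k : ℕ) :
    (ballVolume 2 k : K) = (k ^ 2 + k + 2) / 2 := by
  simp only [ballVolume, sum_range_succ, range_one, sum_singleton, Nat.choose_zero_right,
    Nat.choose_one_right, Nat.cast_add, Nat.cast_one, Nat.cast_choose_two]
  field_simp
  ring

-- `264 / 29` is the least constant that works at `k = 7`, where the bound is tight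
lemma inv_ballVolume_two_le (k : ℕ) :
    ((ballVolume 2 k : ℚ))⁻¹ ≤ 2 / (k + 1).ascFactorial 2 + 4 / (k + 1).ascFactorial 3
      + (264 / 29) / (k + 1).ascFactorial 4 := by
  have hgap : 0 ≤ (2 * (k : ℚ) - 13) * ((k : ℚ) - 7) := by
    rcases le_or_gt k 6 with h | h
    · have : (k : ℚ) ≤ 6 := by exact_mod_cast h
      nlinarith
    · have : (7 : ℚ) ≤ k := by exact_mod_cast h
      nlinarith
  simp only [Nat.ascFactorial_succ, Nat.ascFactorial_zero, cast_ballVolume_two]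
  push_cast
  have hk : (0 : ℚ) ≤ k := Nat.cast_nonneg k
  rw [inv_div, div_le_iff₀ (by positivity)]
  field_simp
  nlinarith [hgap]

lemma sum_inv_ascFactorial_le_of_thirteen_le {q : ℚ} (hq : 13 ≤ q) :
    2 * 4 / ((q + 1) * (q + 2)) + 4 * 8 / ((q + 1) * (q + 2) * (q + 3))
      + 264 / 29 * 16 / ((q + 1) * (q + 2) * (q + 3) * (q + 4))
      ≤ 8 * (2 + 2 / (q + 1 - 6)) / (2 * (q + 1) * (q + 1 - 3)) := by
  have h1 : 0 < q + 1 := by linarith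
  have h5 : q - 5 ≠ 0 := by linarith
  have h2 : q - 2 ≠ 0 := by linarith
  have hL : 2 * 4 / ((q + 1) * (q + 2)) + 4 * 8 / ((q + 1) * (q + 2) * (q + 3))
      + 264 / 29 * 16 / ((q + 1) * (q + 2) * (q + 3) * (q + 4))
      = (232 * (q + 3) * (q + 4) + 928 * (q + 4) + 4224)
          / (29 * (q + 1) * (q + 2) * (q + 3) * (q + 4)) := by
    field_simp
    ring
  have hR : 8 * (2 + 2 / (q + 1 - 6)) / (2 * (q + 1) * (q + 1 - 3))
      = 8 * (q - 4) / ((q - 5) * (q + 1) * (q - 2)) := by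
    rw [show q + 1 - 6 = q - 5 by ring, show q + 1 - 3 = q - 2 by ring]
    field_simp
    ring
  have hcubic : 0 ≤ 232 * q ^ 3 + 2504 * q ^ 2 + 30960 * q - 129472 := by nlinarith
  rw [hL, hR, div_le_div_iff₀ (by positivity) (by nlinarith)]
  nlinarith [mul_nonneg hcubic h1.le]

lemma sum_choose_div_ballVolume_two_le {m : ℕ} (hm : 13 ≤ m) :
    ∑ k ∈ range (m + 1), (m.choose k : ℚ) / ballVolume 2 k
      ≤ 2 ^ (m + 3) * (2 + 2 / ((m + 1 : ℚ) - 6)) / (2 * (m + 1) * ((m + 1 : ℚ) - 3)) := by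
  calc ∑ k ∈ range (m + 1), (m.choose k : ℚ) / ballVolume 2 k
      ≤ ∑ k ∈ range (m + 1), (m.choose k : ℚ) * (2 / (k + 1).ascFactorial 2
          + 4 / (k + 1).ascFactorial 3 + (264 / 29) / (k + 1).ascFactorial 4) :=
        sum_le_sum fun k _ => by
          rw [div_eq_mul_inv]
          exact mul_le_mul_of_nonneg_left (inv_ballVolume_two_le k) (Nat.cast_nonneg _)
    _ = 2 * ∑ k ∈ range (m + 1), (m.choose k : ℚ) / (k + 1).ascFactorial 2
          + 4 * ∑ k ∈ range (m + 1), (m.choose k : ℚ) / (k + 1).ascFactorial 3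
          + 264 / 29 * ∑ k ∈ range (m + 1), (m.choose k : ℚ) / (k + 1).ascFactorial 4 := by
        simp only [mul_sum, ← sum_add_distrib]
        exact sum_congr rfl fun k _ => by ring
    _ ≤ 2 * (2 ^ (m + 2) / (m + 1).ascFactorial 2) + 4 * (2 ^ (m + 3) / (m + 1).ascFactorial 3)
          + 264 / 29 * (2 ^ (m + 4) / (m + 1).ascFactorial 4) := by
        gcongr <;> exact sum_choose_div_ascFactorial_le m _
    _ = 2 ^ m * (2 * 4 / ((m + 1) * (m + 2)) + 4 * 8 / ((m + 1) * (m + 2) * (m + 3))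
          + 264 / 29 * 16 / ((m + 1) * (m + 2) * (m + 3) * (m + 4))) := by
        simp only [Nat.ascFactorial_succ, Nat.ascFactorial_zero, pow_add]
        push_cast
        ring
    _ ≤ 2 ^ m * (8 * (2 + 2 / ((m + 1 : ℚ) - 6)) / (2 * (m + 1) * ((m + 1 : ℚ) - 3))) := by
        gcongr
        exact sum_inv_ascFactorial_le_of_thirteen_le (by exact_mod_cast hm)
    _ = _ := by ring

end GrainCode

theorem stmt13 {n : ℕ} (hn : 14 ≤ n)
    (C : Finset (Fin n → ZMod 2)) (hC : grainCorrecting 2 C) :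
    C.card ≤ 2 * ⌊(2 ^ (n + 2) * (2 + 2 / ((n : ℚ) - 6))) / (2 * (n : ℚ) * ((n : ℚ) - 3))⌋₊ := by
  obtain ⟨m, rfl⟩ : ∃ m, n = m + 1 := ⟨n - 1, by omega⟩
  rw [mul_comm]
  refine (card_le_mul_card_image (f := fun x : Fin (m + 1) → ZMod 2 => x 0) C _
    fun b _ => Nat.le_floor ?_).trans (Nat.mul_le_mul_left _ ((card_le_univ _).trans (by simp)))
  refine (GrainCode.card_filter_apply_zero_le hC b).trans <|
    (GrainCode.sum_choose_div_ballVolume_two_le (by omega)).trans_eq ?_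
  push_cast
  ring
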